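/- arXiv:2110.04606 — 2 statements merged into one kernel-verified Lean document; each statement's English description precedes it below -/
import Mathlib

section
/- Let G be a connected finite simple graph and let B be a set of edges of G such that (i) every cycle of G contains an even number of edges from B, and (ii) every 3-clique of G contains at least one edge belonging to B. Then G admits a 2-coloring of its vertices with no monochromatic triangle, i.e., there exists c : V → ZMod 2 such that no 3-clique of G has all three vertices of the same color. -/
/-!
Count the edges of `B` along a walk modulo 2. Bypassing a repeated vertex cuts off a closed
walk that is either a cycle or an edge traversed back and forth, so this parity is unchanged by
`Walk.bypass`; hence it vanishes on every closed walk and only depends on the endpoints of a walk.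
Measuring it from a fixed root in each connected component gives a colouring in which the two
ends of every edge of `B` get different colours, and every triangle contains such an edge.
-/

namespace SimpleGraph.Walk

variable {V : Type*} [DecidableEq V] {G : SimpleGraph V} (B : Finset (Sym2 V))

def bicolorParity {u v : V} (p : G.Walk u v) : ZMod 2 :=
  p.edges.countP (fun e => decide (e ∈ B))

@[simp]
lemma bicolorParity_nil {u : V} : (nil : G.Walk u u).bicolorParity B = 0 := by
  simp [bicolorParity]

@[simp]
lemma bicolorParity_cons {u v w : V} (h : G.Adj u v) (p : G.Walk v w) :
    (cons h p).bicolorParity B = (if s(u, v) ∈ B then 1 else 0) + p.bicolorParity B := by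
  simp only [bicolorParity, edges_cons, List.countP_cons, decide_eq_true_eq]
  split_ifs <;> push_cast <;> ring

@[simp]
lemma bicolorParity_append {u v w : V} (p : G.Walk u v) (q : G.Walk v w) :
    (p.append q).bicolorParity B = p.bicolorParity B + q.bicolorParity B := by
  simp [bicolorParity, List.countP_append]

@[simp]
lemma bicolorParity_reverse {u v : V} (p : G.Walk u v) :
    p.reverse.bicolorParity B = p.bicolorParity B := by
  simp [bicolorParity]

@[simp]
lemma bicolorParity_copy {u v u' v' : V} (p : G.Walk u v) (hu : u = u') (hv : v = v') :
    (p.copy hu hv).bicolorParity B = p.bicolorParity B := by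
  simp [bicolorParity]

variable {B}

lemma bicolorParity_eq_zero_iff_even {u v : V} (p : G.Walk u v) :
    p.bicolorParity B = 0 ↔ Even (p.edges.countP (fun e => decide (e ∈ B))) :=
  ZMod.natCast_eq_zero_iff_even

lemma bicolorParity_cons_path_eq_zero
    (hcyc : ∀ (v : V) (c : G.Walk v v), c.IsCycle → c.bicolorParity B = 0)
    {u v : V} (h : G.Adj u v) {q : G.Walk v u} (hq : q.IsPath) :
    (cons h q).bicolorParity B = 0 := by
  by_cases hback : s(u, v) ∈ q.edges
  · -- `q` is `h` traversed backwards
    rw [hq.eq_adj_toWalk_of_mem_edges (Sym2.eq_swap ▸ hback)]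
    simp only [bicolorParity_cons, bicolorParity_nil, Sym2.eq_swap (a := v)]
    split_ifs <;> decide
  · exact hcyc u _ ((cons_isCycle_iff q h).mpr ⟨hq, hback⟩)

lemma bicolorParity_bypass
    (hcyc : ∀ (v : V) (c : G.Walk v v), c.IsCycle → c.bicolorParity B = 0)
    {u v : V} (p : G.Walk u v) : p.bypass.bicolorParity B = p.bicolorParity B := by
  induction p with
  | nil => rfl
  | @cons u x v h p ih =>
    simp only [bypass]
    split_ifs with hu
    · have hloop := bicolorParity_cons_path_eq_zero hcyc h ((bypass_isPath p).takeUntil hu)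
      calc (p.bypass.dropUntil u hu).bicolorParity B
          = (cons h (p.bypass.takeUntil u hu)).bicolorParity B
              + (p.bypass.dropUntil u hu).bicolorParity B := by rw [hloop, zero_add]
        _ = (if s(u, x) ∈ B then 1 else 0) + p.bypass.bicolorParity B := by
          rw [bicolorParity_cons, add_assoc, ← bicolorParity_append, p.bypass.take_spec hu]
        _ = (cons h p).bicolorParity B := by rw [ih, bicolorParity_cons]
    · rw [bicolorParity_cons, bicolorParity_cons, ih]

lemma bicolorParity_eq_zero_of_closed
    (hcyc : ∀ (v : V) (c : G.Walk v v), c.IsCycle → c.bicolorParity B = 0)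
    {u : V} (p : G.Walk u u) : p.bicolorParity B = 0 := by
  have hnil : p.bypass = nil := eq_nil_iff_nil.mpr (isPath_iff_nil.mp (bypass_isPath p))
  rw [← bicolorParity_bypass hcyc, hnil, bicolorParity_nil]

lemma bicolorParity_eq_of_same_ends
    (hcyc : ∀ (v : V) (c : G.Walk v v), c.IsCycle → c.bicolorParity B = 0)
    {u v : V} (p q : G.Walk u v) : p.bicolorParity B = q.bicolorParity B := by
  have := bicolorParity_eq_zero_of_closed hcyc (p.append q.reverse)
  rw [bicolorParity_append, bicolorParity_reverse] at this
  exact CharTwo.add_eq_zero.mp this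

end SimpleGraph.Walk

open SimpleGraph Walk in
theorem SimpleGraph.exists_coloring_ne_of_mem {V : Type*} [DecidableEq V]
    {G : SimpleGraph V} {B : Finset (Sym2 V)}
    (hcyc : ∀ (v : V) (c : G.Walk v v), c.IsCycle → c.bicolorParity B = 0) :
    ∃ col : V → ZMod 2, ∀ u v, G.Adj u v → s(u, v) ∈ B → col u ≠ col v := by
  let root (v : V) : V := (G.connectedComponentMk v).out
  have reach (v : V) : G.Reachable (root v) v := ConnectedComponent.exact (Quot.out_eq _)
  refine ⟨fun v => (reach v).some.bicolorParity B, fun u v h hB hcol => ?_⟩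
  have hroot : root u = root v := by
    simp only [root, ConnectedComponent.connectedComponentMk_eq_of_adj h]
  have hpar := bicolorParity_eq_of_same_ends hcyc
    (((reach u).some.copy hroot rfl).concat h) (reach v).some
  simp [concat, hB, hcol] at hpar

theorem stmt_4_general {V : Type*} [DecidableEq V] (G : SimpleGraph V)
    (B : Finset (Sym2 V))
    (hcyc : ∀ (v : V) (w : G.Walk v v), w.IsCycle →
      Even (w.edges.countP (fun e => decide (e ∈ B))))
    (htri : ∀ x y z : V, G.Adj x y → G.Adj x z → G.Adj y z →
      s(x, y) ∈ B ∨ s(x, z) ∈ B ∨ s(y, z) ∈ B) :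
    ∃ c : V → ZMod 2,
      ¬ ∃ x y z : V, G.Adj x y ∧ G.Adj x z ∧ G.Adj y z ∧ c x = c y ∧ c y = c z := by
  obtain ⟨c, hc⟩ := G.exists_coloring_ne_of_mem (B := B) fun v w hw =>
    (w.bicolorParity_eq_zero_iff_even).mpr (hcyc v w hw)
  refine ⟨c, ?_⟩
  rintro ⟨x, y, z, hxy, hxz, hyz, hcxy, hcyz⟩
  rcases htri x y z hxy hxz hyz with hB | hB | hB
  · exact hc x y hxy hB hcxy
  · exact hc x z hxz hB (hcxy.trans hcyz)
  · exact hc y z hyz hB hcyz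

/-- If every cycle of a connected finite simple graph `G` contains an even
number of edges from `B`, and every 3-clique of `G` contains at least one edge of `B`,
then `G` admits a 2-coloring with no monochromatic triangle. -/
theorem stmt_4 {V : Type*} [Fintype V] [DecidableEq V] (G : SimpleGraph V)
    (hG : G.Connected) (B : Finset (Sym2 V)) (hB : ∀ e ∈ B, e ∈ G.edgeSet)
    (hcyc : ∀ (v : V) (w : G.Walk v v), w.IsCycle →
      Even (w.edges.countP (fun e => decide (e ∈ B))))
    (htri : ∀ x y z : V, G.Adj x y → G.Adj x z → G.Adj y z →
      s(x, y) ∈ B ∨ s(x, z) ∈ B ∨ s(y, z) ∈ B) :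
    ∃ c : V → ZMod 2,
      ¬ ∃ x y z : V, G.Adj x y ∧ G.Adj x z ∧ G.Adj y z ∧ c x = c y ∧ c y = c z :=
  stmt_4_general G B hcyc htri
end

section
/- Let G be a finite simple graph on vertex set V with an edge e = {u,v}. Define the simple graph G⁺ on the vertex set V ⊕ Bool (V together with two new vertices u⁺ = inr false and v⁺ = inr true) whose edges are: all edges of G except e (between the corresponding inl-vertices), together with the two pendant edges {inl u, inr false} and {inl v, inr true}. Then G has a perfect matching containing the edge e if and only if G⁺ has a perfect matching. -/
/-- A set `M` of edges of `G` is a matching if every vertex is incident to at most one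
edge of `M`. -/
def IsMatchingES {V : Type*} (G : SimpleGraph V) (M : Set (Sym2 V)) : Prop :=
  M ⊆ G.edgeSet ∧ ∀ v : V, ∀ e ∈ M, ∀ f ∈ M, v ∈ e → v ∈ f → e = f

/-- A matching `M` of `G` is perfect if every vertex is incident to some edge of `M`. -/
def IsPerfectMatchingES {V : Type*} (G : SimpleGraph V) (M : Set (Sym2 V)) : Prop :=
  IsMatchingES G M ∧ ∀ v : V, ∃ e ∈ M, v ∈ e

/-- The pendant-augmented graph `G⁺` on `V ⊕ Bool`: take `G`, remove the edge `{u,v}`,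
and attach a pendant vertex `inr false` to `u` and a pendant vertex `inr true` to `v`. -/
def Gplus {V : Type*} (G : SimpleGraph V) (u v : V) : SimpleGraph (V ⊕ Bool) where
  Adj a b :=
    (∃ x y : V, a = Sum.inl x ∧ b = Sum.inl y ∧ G.Adj x y ∧ s(x, y) ≠ s(u, v)) ∨
    ((a = Sum.inl u ∧ b = Sum.inr false) ∨ (a = Sum.inr false ∧ b = Sum.inl u)) ∨
    ((a = Sum.inl v ∧ b = Sum.inr true) ∨ (a = Sum.inr true ∧ b = Sum.inl v))
  symm := by
    constructor
    rintro a b (⟨x, y, rfl, rfl, hxy, hne⟩ | h | h)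
    · exact Or.inl ⟨y, x, rfl, rfl, hxy.symm, by rwa [Sym2.eq_swap]⟩
    · exact Or.inr (Or.inl (by tauto))
    · exact Or.inr (Or.inr (by tauto))
  loopless := by
    constructor
    rintro a (⟨x, y, rfl, h, hxy, _⟩ | (⟨h1, h2⟩ | ⟨h1, h2⟩) | (⟨h1, h2⟩ | ⟨h1, h2⟩)) <;>
      simp_all

/-! Trading the edge `s(u, v)` for the two pendant edges `s(inl u, inr false)` and
`s(inl v, inr true)` turns a perfect matching of `G` through `s(u, v)` into one of `Gplus G u v`.
Conversely, each pendant vertex has a single neighbour, so a perfect matching of `Gplus G u v`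
contains both pendant edges; its remaining edges then come from `G` and avoid `u` and `v`, and
adding back `s(u, v)` gives a perfect matching of `G`. -/

section

variable {V : Type*}

theorem Sym2.map_inl_ne_of_inr_mem {α β : Type*} {b : β} {w : Sym2 (α ⊕ β)} (hb : Sum.inr b ∈ w)
    (z : Sym2 α) : z.map Sum.inl ≠ w := by
  rintro rfl
  simp [Sym2.mem_map] at hb

theorem Sym2.disjoint_coe_map_iff {α β : Type*} {f : α → β} (hf : f.Injective) {z w : Sym2 α} :
    Disjoint (z.map f : Set β) (w.map f) ↔ Disjoint (z : Set α) w := by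
  rw [Sym2.coe_map, Sym2.coe_map, Set.disjoint_image_iff hf]

theorem isMatchingES_iff {W : Type*} {H : SimpleGraph W} {M : Set (Sym2 W)} :
    IsMatchingES H M ↔ M ⊆ H.edgeSet ∧ M.PairwiseDisjoint ((↑) : Sym2 W → Set W) := by
  refine and_congr_right fun _ => ⟨fun h e he f hf hne => ?_, fun h w e he f hf hwe hwf => ?_⟩
  · exact Set.disjoint_left.2 fun w hwe hwf => hne (h w e he f hf hwe hwf)
  · exact h.elim_set he hf w hwe hwf

theorem IsPerfectMatchingES.mem_of_forall_eq {W : Type*} {H : SimpleGraph W} {M : Set (Sym2 W)}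
    (hM : IsPerfectMatchingES H M) {w : W} {p : Sym2 W}
    (h : ∀ z ∈ H.edgeSet, w ∈ z → z = p) : p ∈ M := by
  obtain ⟨z, hz, hwz⟩ := hM.2 w
  exact h z (hM.1.1 hz) hwz ▸ hz

def attachPendants (u v : V) (S : Set (Sym2 V)) : Set (Sym2 (V ⊕ Bool)) :=
  Sym2.map Sum.inl '' (S \ {s(u, v)}) ∪ {s(Sum.inl u, Sum.inr false), s(Sum.inl v, Sum.inr true)}

def detachPendants (u v : V) (M : Set (Sym2 (V ⊕ Bool))) : Set (Sym2 V) :=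
  insert s(u, v) (Sym2.map Sum.inl ⁻¹' M)

theorem attachPendants_mono (u v : V) : Monotone (attachPendants u v) := fun _ _ h =>
  Set.union_subset_union_left _ (Set.image_mono (Set.sdiff_subset_sdiff_left h))

theorem edgeSet_Gplus (G : SimpleGraph V) (u v : V) :
    (Gplus G u v).edgeSet = attachPendants u v G.edgeSet := by
  ext z
  induction z using Sym2.ind with
  | _ a b =>
    rcases a with x | a
    · rcases b with y | b
      · rw [attachPendants, ← Sym2.map_mk,
          Set.mem_union, (Sym2.map.injective Sum.inl_injective).mem_set_image]
        simp [Gplus]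
      · simp [Gplus, attachPendants, Sym2.map_inl_ne_of_inr_mem (Sym2.mem_mk_right (Sum.inl x) _)]
    · simp [Gplus, attachPendants, Sym2.map_inl_ne_of_inr_mem (Sym2.mem_mk_left _ b)]

theorem eq_pendant_of_inr_mem {G : SimpleGraph V} {u v : V} {z : Sym2 (V ⊕ Bool)}
    (hz : z ∈ (Gplus G u v).edgeSet) :
    (Sum.inr false ∈ z → z = s(Sum.inl u, Sum.inr false)) ∧
      (Sum.inr true ∈ z → z = s(Sum.inl v, Sum.inr true)) := by
  rw [edgeSet_Gplus] at hz
  rcases hz with ⟨f, -, rfl⟩ | rfl | rfl <;> simp [Sym2.mem_map]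

theorem IsMatchingES.attachPendants {G : SimpleGraph V} {M : Set (Sym2 V)} {u v : V}
    (hM : IsMatchingES G M) (he : s(u, v) ∈ M) :
    IsMatchingES (Gplus G u v) (attachPendants u v M) := by
  obtain ⟨hsub, hdisj⟩ := isMatchingES_iff.1 hM
  have huv : u ≠ v := G.ne_of_adj (hsub he)
  refine isMatchingES_iff.2 ⟨edgeSet_Gplus G u v ▸ attachPendants_mono u v hsub, ?_⟩
  refine Set.PairwiseDisjoint.union ?_ ?_ ?_
  · rw [(Sym2.map.injective Sum.inl_injective).injOn.pairwiseDisjoint_image]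
    intro e he f hf hne
    exact (Sym2.disjoint_coe_map_iff Sum.inl_injective).2 (hdisj he.1 hf.1 hne)
  · simp [Set.PairwiseDisjoint, Set.pairwise_pair, Function.onFun, huv, huv.symm]
  · rintro _ ⟨f, hf, rfl⟩ p hp -
    obtain ⟨hu, hv⟩ : u ∉ f ∧ v ∉ f := by simpa [Function.onFun] using hdisj hf.1 he hf.2
    rcases hp with rfl | rfl <;> simp [Sym2.coe_map, hu, hv]

theorem IsPerfectMatchingES.attachPendants {G : SimpleGraph V} {M : Set (Sym2 V)} {u v : V}
    (hM : IsPerfectMatchingES G M) (he : s(u, v) ∈ M) :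
    IsPerfectMatchingES (Gplus G u v) (attachPendants u v M) := by
  refine ⟨hM.1.attachPendants he, ?_⟩
  rintro (x | _ | _)
  · obtain ⟨f, hf, hxf⟩ := hM.2 x
    by_cases hfe : f = s(u, v)
    · subst hfe
      rcases Sym2.mem_iff.1 hxf with rfl | rfl
      · exact ⟨_, Or.inr (Or.inl rfl), Sym2.mem_mk_left _ _⟩
      · exact ⟨_, Or.inr (Or.inr rfl), Sym2.mem_mk_left _ _⟩
    · exact ⟨f.map Sum.inl, Or.inl ⟨f, ⟨hf, hfe⟩, rfl⟩, Sym2.mem_map.2 ⟨x, hxf, rfl⟩⟩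
  · exact ⟨_, Or.inr (Or.inl rfl), Sym2.mem_mk_right _ _⟩
  · exact ⟨_, Or.inr (Or.inr rfl), Sym2.mem_mk_right _ _⟩

theorem IsMatchingES.detachPendants {G : SimpleGraph V} {M : Set (Sym2 (V ⊕ Bool))} {u v : V}
    (huv : G.Adj u v) (hM : IsMatchingES (Gplus G u v) M)
    (hpu : s(Sum.inl u, Sum.inr false) ∈ M) (hpv : s(Sum.inl v, Sum.inr true) ∈ M) :
    IsMatchingES G (detachPendants u v M) := by
  obtain ⟨hsub, hdisj⟩ := isMatchingES_iff.1 hM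
  have hinj := Sym2.map.injective (Sum.inl_injective (α := V) (β := Bool))
  -- an edge of `M` through `inl u` is the pendant edge at `u`, which is not an image edge
  have hfree : ∀ f : Sym2 V, f.map Sum.inl ∈ M → u ∉ f ∧ v ∉ f := by
    refine fun f hf => ⟨fun hu => ?_, fun hv => ?_⟩
    · exact Sym2.map_inl_ne_of_inr_mem (Sym2.mem_mk_right _ _) f
        (hdisj.elim_set hf hpu _ (Sym2.mem_map.2 ⟨u, hu, rfl⟩) (Sym2.mem_mk_left _ _))
    · exact Sym2.map_inl_ne_of_inr_mem (Sym2.mem_mk_right _ _) f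
        (hdisj.elim_set hf hpv _ (Sym2.mem_map.2 ⟨v, hv, rfl⟩) (Sym2.mem_mk_left _ _))
  refine isMatchingES_iff.2 ⟨?_, ?_⟩
  · rintro f (rfl | hf)
    · exact huv
    rcases edgeSet_Gplus G u v ▸ hsub hf with ⟨g, ⟨hg, -⟩, hgf⟩ | h | h
    · exact hinj hgf ▸ hg
    · exact absurd h (Sym2.map_inl_ne_of_inr_mem (Sym2.mem_mk_right _ _) f)
    · exact absurd h (Sym2.map_inl_ne_of_inr_mem (Sym2.mem_mk_right _ _) f)
  refine Set.PairwiseDisjoint.insert (fun f hf g hg hne => ?_) fun f hf _ => ?_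
  · exact (Sym2.disjoint_coe_map_iff Sum.inl_injective).1 (hdisj hf hg (hinj.ne hne))
  · simpa using hfree f hf

theorem IsPerfectMatchingES.detachPendants {G : SimpleGraph V} {M : Set (Sym2 (V ⊕ Bool))}
    {u v : V} (huv : G.Adj u v) (hM : IsPerfectMatchingES (Gplus G u v) M) :
    IsPerfectMatchingES G (detachPendants u v M) := by
  refine ⟨hM.1.detachPendants huv
    (hM.mem_of_forall_eq fun z hz => (eq_pendant_of_inr_mem hz).1)
    (hM.mem_of_forall_eq fun z hz => (eq_pendant_of_inr_mem hz).2), fun w => ?_⟩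
  obtain ⟨z, hz, hwz⟩ := hM.2 (Sum.inl w)
  rcases edgeSet_Gplus G u v ▸ hM.1.1 hz with ⟨f, -, rfl⟩ | rfl | rfl
  · exact ⟨f, Or.inr hz, by simpa [Sym2.mem_map] using hwz⟩
  · exact ⟨s(u, v), Or.inl rfl, by simp_all⟩
  · exact ⟨s(u, v), Or.inl rfl, by simp_all⟩

end

theorem stmt_8_general {V : Type*} (G : SimpleGraph V)
    (u v : V) (huv : G.Adj u v) :
    (∃ M : Set (Sym2 V), IsPerfectMatchingES G M ∧ s(u, v) ∈ M) ↔
      (∃ Mplus : Set (Sym2 (V ⊕ Bool)), IsPerfectMatchingES (Gplus G u v) Mplus) :=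
  ⟨fun ⟨_, hM, he⟩ => ⟨_, hM.attachPendants he⟩,
    fun ⟨_, hM⟩ => ⟨_, hM.detachPendants huv, Set.mem_insert _ _⟩⟩

/-- `G` has a perfect matching containing the edge `e = {u,v}` if and
only if the pendant-augmented graph `G⁺` has a perfect matching. -/
theorem stmt_8 {V : Type*} [Fintype V] [DecidableEq V] (G : SimpleGraph V)
    (u v : V) (huv : G.Adj u v) :
    (∃ M : Set (Sym2 V), IsPerfectMatchingES G M ∧ s(u, v) ∈ M) ↔
      (∃ Mplus : Set (Sym2 (V ⊕ Bool)), IsPerfectMatchingES (Gplus G u v) Mplus) :=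
  stmt_8_general G u v huv
end
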